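/- With the same setup, for any two unclaimed vertices v₁, v₂ (σ(v₁)=σ(v₂)=U, v₁≠v₂), we have Δ_{B←v₂}(σ_{B←v₁}) ≤ Δ_{B←v₂}(σ); that is, claiming a vertex for Breaker can only decrease the B-potential of any other unclaimed vertex. -/

import Mathlib

open scoped Classical

inductive Mark : Type
  | U | M | B
deriving DecidableEq

noncomputable def wS {V : Type*} (lam : ℝ) (σ : V → Mark) (S : Finset V) : ℝ :=
  if ∀ v ∈ S, σ v ≠ Mark.B then lam ^ (S.filter fun v => σ v = Mark.U).card else 0

noncomputable def totalW {V : Type*} (lam : ℝ) (E : Set (Finset V)) (σ : V → Mark) : ℝ :=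
  ∑' S : E, wS lam σ S.1

/-! Blocking a vertex of a hyperedge kills its weight and leaves the weights of all other
hyperedges unchanged. Hence the drop caused by blocking `v₂` is the weight of the edges through
`v₂`, and blocking `v₁` first can only lower each of these weights. -/

section Weight

variable {V : Type*} {lam : ℝ} {σ : V → Mark} {S : Finset V} {v : V}

lemma wS_nonneg (hlam : 0 ≤ lam) : 0 ≤ wS lam σ S := by
  unfold wS
  split <;> positivity

lemma wS_eq_zero_of_mem (hv : v ∈ S) (hB : σ v = Mark.B) : wS lam σ S = 0 :=
  if_neg fun h => h v hv hB

lemma wS_update_of_notMem (hv : v ∉ S) (m : Mark) :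
    wS lam (Function.update σ v m) S = wS lam σ S := by
  have hS : ∀ w ∈ S, Function.update σ v m w = σ w := fun w hw =>
    Function.update_of_ne (ne_of_mem_of_not_mem hw hv) m σ
  unfold wS
  rw [Finset.filter_congr fun w hw => by rw [hS w hw]]
  exact if_congr ⟨fun h w hw => hS w hw ▸ h w hw, fun h w hw => (hS w hw).symm ▸ h w hw⟩ rfl rfl

lemma wS_update_B_le (hlam : 0 ≤ lam) : wS lam (Function.update σ v Mark.B) S ≤ wS lam σ S := by
  by_cases hv : v ∈ S
  · rw [wS_eq_zero_of_mem hv (Function.update_self v Mark.B σ)]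
    exact wS_nonneg hlam
  · rw [wS_update_of_notMem hv]

lemma wS_sub_wS_update_B (σ : V → Mark) (S : Finset V) (v : V) :
    wS lam σ S - wS lam (Function.update σ v Mark.B) S = if v ∈ S then wS lam σ S else 0 := by
  split_ifs with hv
  · rw [wS_eq_zero_of_mem hv (Function.update_self v Mark.B σ), sub_zero]
  · rw [wS_update_of_notMem hv, sub_self]

lemma wS_update_B_sub_wS_update_B_le (hlam : 0 ≤ lam) (v₁ v₂ : V) :
    wS lam (Function.update σ v₁ Mark.B) S
        - wS lam (Function.update (Function.update σ v₁ Mark.B) v₂ Mark.B) S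
      ≤ wS lam σ S - wS lam (Function.update σ v₂ Mark.B) S := by
  rw [wS_sub_wS_update_B, wS_sub_wS_update_B]
  split_ifs
  · exact wS_update_B_le hlam
  · exact le_rfl

end Weight

theorem stmt_2_general {V : Type*} (lam : ℝ) (h0 : 0 < lam)
    (E : Set (Finset V)) (σ : V → Mark) (v₁ v₂ : V)
    (hσ : Summable fun S : E => wS lam σ S.1)
    (h1B : Summable fun S : E => wS lam (Function.update σ v₁ Mark.B) S.1)
    (h2B : Summable fun S : E => wS lam (Function.update σ v₂ Mark.B) S.1)
    (h12B : Summable fun S : E =>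
      wS lam (Function.update (Function.update σ v₁ Mark.B) v₂ Mark.B) S.1) :
    totalW lam E (Function.update σ v₁ Mark.B)
        - totalW lam E (Function.update (Function.update σ v₁ Mark.B) v₂ Mark.B)
      ≤ totalW lam E σ - totalW lam E (Function.update σ v₂ Mark.B) := by
  unfold totalW
  rw [← h1B.tsum_sub h12B, ← hσ.tsum_sub h2B]
  exact (h1B.sub h12B).tsum_le_tsum (fun S => wS_update_B_sub_wS_update_B_le h0.le v₁ v₂)
    (hσ.sub h2B)

/-- Observation: `Δ_{B←v₂}(σ_{B←v₁}) ≤ Δ_{B←v₂}(σ)`. -/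
theorem stmt_2 {V : Type*} (lam : ℝ) (h0 : 0 < lam) (h1 : lam < 1)
    (E : Set (Finset V)) (σ : V → Mark) (v₁ v₂ : V) (hne : v₁ ≠ v₂)
    (hv₁ : σ v₁ = Mark.U) (hv₂ : σ v₂ = Mark.U)
    (hσ : Summable fun S : E => wS lam σ S.1)
    (h1B : Summable fun S : E => wS lam (Function.update σ v₁ Mark.B) S.1)
    (h2B : Summable fun S : E => wS lam (Function.update σ v₂ Mark.B) S.1)
    (h12B : Summable fun S : E =>
      wS lam (Function.update (Function.update σ v₁ Mark.B) v₂ Mark.B) S.1) :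
    totalW lam E (Function.update σ v₁ Mark.B)
        - totalW lam E (Function.update (Function.update σ v₁ Mark.B) v₂ Mark.B)
      ≤ totalW lam E σ - totalW lam E (Function.update σ v₂ Mark.B) :=
  stmt_2_general lam h0 E σ v₁ v₂ hσ h1B h2B h12B
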